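/- arXiv:2505.02790 — 4 statements merged into one kernel-verified Lean document; each statement's English description precedes it below -/
import Mathlib

section
/- (Calibration implies minimality.) Let W ⊆ U be open and let φ : W → ℝ be of class C¹ with ⟨dφ(q), Σⱼ hⱼ Xⱼ(q)⟩ ≤ |h| for every q ∈ W and h ∈ ℝᵐ. Let γ₀ : [a,b] → W be an admissible curve whose control h₀ satisfies |h₀(t)| = 1 and ⟨dφ(γ₀(t)), γ₀'(t)⟩ = 1 for a.e. t ∈ [a,b]. Then every admissible curve κ : [c,d] → W with κ(c) = γ₀(a) and κ(d) = γ₀(b) satisfies L(κ) ≥ b − a = L(γ₀); in particular γ₀ is length-minimizing among admissible curves that stay in W. -/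
/-!
Along an admissible curve `κ` in `W` with control `g`, the function `φ ∘ κ` is absolutely
continuous (`φ` is Lipschitz on the compact trace of `κ`), so the chain rule and the fundamental
theorem of calculus give `φ(κ d) - φ(κ c) = ∫ dφ(κ t)(Σⱼ gⱼ(t) Xⱼ(κ t)) dt`. The calibration
inequality bounds the integrand by `|g(t)|`, so the length of `κ` is at least the increment of
`φ` between its endpoints. Along `γ₀` both inequalities are equalities a.e., so its length and
the increment of `φ` are both `b - a`.
-/

open MeasureTheory Set
open scoped ENNReal

noncomputable section

abbrev Eu (n : ℕ) := EuclideanSpace ℝ (Fin n)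

/-- `h` is a measurable control for the absolutely continuous curve `γ` on `[a,b]`. -/
def IsControlOf {n m : ℕ} (X : Fin m → Eu n → Eu n) (a b : ℝ)
    (γ : ℝ → Eu n) (h : ℝ → Eu m) : Prop :=
  AEMeasurable h (volume.restrict (Icc a b)) ∧
  IntegrableOn (fun t => ∑ j, h t j • X j (γ t)) (Icc a b) volume ∧
  ∀ t ∈ Icc a b, γ t = γ a + ∫ s in a..t, ∑ j, h s j • X j (γ s)

/-- Length of a curve: infimum of `∫ |h|` over all measurable controls. -/
def ccLength {n m : ℕ} (X : Fin m → Eu n → Eu n) (a b : ℝ) (γ : ℝ → Eu n) : ℝ≥0∞ :=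
  ⨅ (h : ℝ → Eu m) (_ : IsControlOf X a b γ h), ∫⁻ t in Icc a b, (‖h t‖₊ : ℝ≥0∞)

/-- Carnot–Carathéodory distance on `U`. -/
def ccDist {n m : ℕ} (X : Fin m → Eu n → Eu n) (U : Set (Eu n)) (p q : Eu n) : ℝ≥0∞ :=
  ⨅ (a : ℝ) (b : ℝ) (γ : ℝ → Eu n) (_ : a ≤ b) (_ : ∀ t ∈ Icc a b, γ t ∈ U)
    (_ : γ a = p) (_ : γ b = q) (_ : ∃ h, IsControlOf X a b γ h),
    ccLength X a b γ

/-- CC ball of centre `q` and radius `r` inside `U`. -/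
def ccBall {n m : ℕ} (X : Fin m → Eu n → Eu n) (U : Set (Eu n)) (q : Eu n) (r : ℝ) :
    Set (Eu n) :=
  {x ∈ U | ccDist X U q x < ENNReal.ofReal r}

/-- Diameter of a set with respect to the CC distance. -/
def ccDiam {n m : ℕ} (X : Fin m → Eu n → Eu n) (U : Set (Eu n)) (S : Set (Eu n)) : ℝ≥0∞ :=
  ⨆ (x ∈ S) (y ∈ S), ccDist X U x y

/-- `f` is of class `C^{1,1}` on `U`: continuously differentiable with locally
Lipschitz derivative. -/
def IsC11On {n : ℕ} (f : Eu n → Eu n) (U : Set (Eu n)) : Prop :=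
  ContDiffOn ℝ 1 f U ∧
  ∀ q ∈ U, ∃ (K : NNReal) (V : Set (Eu n)), V ∈ nhdsWithin q U ∧
    LipschitzOnWith K (fderiv ℝ f) V

open Filter Topology
open scoped NNReal

theorem AbsolutelyContinuousOnInterval.of_dist_le_mul {X Y : Type*} [PseudoMetricSpace X]
    [PseudoMetricSpace Y] {f : ℝ → X} {g : ℝ → Y} {a b K : ℝ}
    (hg : AbsolutelyContinuousOnInterval g a b)
    (hfg : ∀ x ∈ uIcc a b, ∀ y ∈ uIcc a b, dist (f x) (f y) ≤ K * dist (g x) (g y)) :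
    AbsolutelyContinuousOnInterval f a b := by
  unfold AbsolutelyContinuousOnInterval at hg ⊢
  refine squeeze_zero' (Eventually.of_forall fun _ ↦ Finset.sum_nonneg fun _ _ ↦ dist_nonneg)
    ?_ (by simpa using Tendsto.const_mul K hg)
  filter_upwards [eventually_inf_principal.mpr (Eventually.of_forall fun _ h ↦ h)] with E hE
  rw [Finset.mul_sum]
  exact Finset.sum_le_sum fun i hi ↦ hfg _ (hE.1 i hi).1 _ (hE.1 i hi).2

theorem LipschitzOnWith.comp_absolutelyContinuousOnInterval {X Y : Type*} [PseudoMetricSpace X]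
    [PseudoMetricSpace Y] {g : X → Y} {f : ℝ → X} {K : ℝ≥0} {a b : ℝ}
    (hg : LipschitzOnWith K g (f '' uIcc a b)) (hf : AbsolutelyContinuousOnInterval f a b) :
    AbsolutelyContinuousOnInterval (g ∘ f) a b :=
  hf.of_dist_le_mul fun _ hx _ hy ↦
    hg.dist_le_mul _ (mem_image_of_mem f hx) _ (mem_image_of_mem f hy)

section Curve

variable {E : Type*} [NormedAddCommGroup E] [NormedSpace ℝ E]

theorem absolutelyContinuousOnInterval_of_eq_add_integral {γ v : ℝ → E} {a b : ℝ}
    (hv : IntervalIntegrable v volume a b)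
    (hγ : ∀ t ∈ uIcc a b, γ t = γ a + ∫ s in a..t, v s) :
    AbsolutelyContinuousOnInterval γ a b := by
  refine (hv.norm.absolutelyContinuousOnInterval_intervalIntegral left_mem_uIcc).of_dist_le_mul
    (K := 1) fun x hx y hy ↦ ?_
  have hvI : ∀ t ∈ uIcc a b, IntervalIntegrable v volume a t := fun t ht ↦
    hv.mono_set (uIcc_subset_uIcc_left ht)
  have hnI : ∀ t ∈ uIcc a b, IntervalIntegrable (fun s ↦ ‖v s‖) volume a t := fun t ht ↦
    (hvI t ht).norm
  rw [one_mul, hγ x hx, hγ y hy, dist_add_left, dist_eq_norm, Real.dist_eq,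
    intervalIntegral.integral_interval_sub_left (hvI x hx) (hvI y hy),
    intervalIntegral.integral_interval_sub_left (hnI x hx) (hnI y hy)]
  exact intervalIntegral.norm_integral_le_abs_integral_norm

theorem ae_hasDerivAt_of_eq_add_integral [CompleteSpace E] {γ v : ℝ → E} {a b : ℝ}
    (hv : IntervalIntegrable v volume a b)
    (hγ : ∀ t ∈ Icc a b, γ t = γ a + ∫ s in a..t, v s) :
    ∀ᵐ t, t ∈ Ioo a b → HasDerivAt γ (v t) t := by
  filter_upwards [hv.ae_hasDerivAt_integral] with t ht htab
  have htI : t ∈ uIcc a b := Ioo_subset_Icc_self.trans Icc_subset_uIcc htab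
  have hγt : (fun s ↦ γ a + ∫ r in a..s, v r) =ᶠ[𝓝 t] γ :=
    eventually_of_mem (Ioo_mem_nhds htab.1 htab.2) fun s hs ↦ (hγ s (Ioo_subset_Icc_self hs)).symm
  exact ((ht htI a left_mem_uIcc).const_add (γ a)).congr_of_eventuallyEq hγt.symm

theorem ContDiffOn.locallyLipschitzOn_of_isOpen {F : Type*} [NormedAddCommGroup F]
    [NormedSpace ℝ F] {f : E → F} {s : Set E} (hs : IsOpen s) (hf : ContDiffOn ℝ 1 f s) :
    LocallyLipschitzOn s f := fun x hx ↦ by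
  obtain ⟨K, t, ht, hK⟩ := (hf.contDiffAt (hs.mem_nhds hx)).exists_lipschitzOnWith
  exact ⟨K, t, mem_nhdsWithin_of_mem_nhds ht, hK⟩

theorem integral_fderiv_apply_eq_sub [CompleteSpace E] {W : Set E} (hW : IsOpen W) {φ : E → ℝ}
    (hφ : ContDiffOn ℝ 1 φ W) {γ v : ℝ → E} {a b : ℝ} (hab : a ≤ b)
    (hv : IntervalIntegrable v volume a b)
    (hγ : ∀ t ∈ Icc a b, γ t = γ a + ∫ s in a..t, v s) (hγW : ∀ t ∈ Icc a b, γ t ∈ W) :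
    IntervalIntegrable (fun t ↦ fderiv ℝ φ (γ t) (v t)) volume a b ∧
      ∫ t in a..b, fderiv ℝ φ (γ t) (v t) = φ (γ b) - φ (γ a) := by
  rw [← uIcc_of_le hab] at hγ hγW
  have hγac := absolutelyContinuousOnInterval_of_eq_add_integral hv hγ
  have hK : IsCompact (γ '' uIcc a b) := isCompact_uIcc.image_of_continuousOn hγac.continuousOn
  obtain ⟨L, hL⟩ := ((hφ.locallyLipschitzOn_of_isOpen hW).mono
    (image_subset_iff.mpr hγW)).exists_lipschitzOnWith_of_compact hK
  have hφγ : AbsolutelyContinuousOnInterval (φ ∘ γ) a b :=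
    hL.comp_absolutelyContinuousOnInterval hγac
  rw [uIcc_of_le hab] at hγ hγW
  have hderiv : (fun t ↦ deriv (φ ∘ γ) t) =ᵐ[volume.restrict (uIoc a b)]
      fun t ↦ fderiv ℝ φ (γ t) (v t) := by
    rw [uIoc_of_le hab, ← restrict_Ioo_eq_restrict_Ioc, EventuallyEq,
      ae_restrict_iff' measurableSet_Ioo]
    filter_upwards [ae_hasDerivAt_of_eq_add_integral hv hγ] with t ht htab
    have hφt := (hφ.differentiableOn one_ne_zero).differentiableAt
      (hW.mem_nhds (hγW t (Ioo_subset_Icc_self htab)))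
    exact (hφt.hasFDerivAt.comp_hasDerivAt t (ht htab)).deriv
  exact ⟨hφγ.intervalIntegrable_deriv.congr_ae hderiv,
    (intervalIntegral.integral_congr_ae_restrict hderiv).symm.trans hφγ.integral_deriv_eq_sub⟩

end Curve

section Calibration

variable {n m : ℕ} {X : Fin m → Eu n → Eu n} {W : Set (Eu n)} {φ : Eu n → ℝ}

theorem IsControlOf.intervalIntegrable {a b : ℝ} (hab : a ≤ b) {γ : ℝ → Eu n} {h : ℝ → Eu m}
    (hh : IsControlOf X a b γ h) :
    IntervalIntegrable (fun t ↦ ∑ j, h t j • X j (γ t)) volume a b :=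
  (intervalIntegrable_iff_integrableOn_Icc_of_le hab).mpr hh.2.1

theorem ofReal_sub_le_lintegral_of_calibration (hW : IsOpen W) (hφ : ContDiffOn ℝ 1 φ W)
    (hcal : ∀ q ∈ W, ∀ h : Eu m, fderiv ℝ φ q (∑ j, h j • X j q) ≤ ‖h‖)
    {c d : ℝ} (hcd : c ≤ d) {κ : ℝ → Eu n} {g : ℝ → Eu m} (hκW : ∀ t ∈ Icc c d, κ t ∈ W)
    (hg : IsControlOf X c d κ g) :
    ENNReal.ofReal (φ (κ d) - φ (κ c)) ≤ ∫⁻ t in Icc c d, (‖g t‖₊ : ℝ≥0∞) := by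
  rcases eq_or_ne (∫⁻ t in Icc c d, (‖g t‖₊ : ℝ≥0∞)) ⊤ with hinf | hfin
  · exact hinf ▸ le_top
  have hgint : IntegrableOn g (Icc c d) :=
    ⟨hg.1.aestronglyMeasurable,
      by simpa [hasFiniteIntegral_def, enorm_eq_nnnorm, lt_top_iff_ne_top] using hfin⟩
  have hgI : IntervalIntegrable (fun t ↦ ‖g t‖) volume c d :=
    (intervalIntegrable_iff_integrableOn_Icc_of_le hcd).mpr hgint.norm
  obtain ⟨hdφI, hFTC⟩ :=
    integral_fderiv_apply_eq_sub hW hφ hcd (hg.intervalIntegrable hcd) hg.2.2 hκW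
  calc ENNReal.ofReal (φ (κ d) - φ (κ c))
      ≤ ENNReal.ofReal (∫ t in c..d, ‖g t‖) := by
        rw [← hFTC]
        exact ENNReal.ofReal_le_ofReal <| intervalIntegral.integral_mono_on hcd hdφI hgI
          fun t ht ↦ hcal _ (hκW t ht) (g t)
    _ = ∫⁻ t in Icc c d, (‖g t‖₊ : ℝ≥0∞) := by
        rw [intervalIntegral.integral_of_le hcd, ← integral_Icc_eq_integral_Ioc,
          ofReal_integral_norm_eq_lintegral_enorm hgint]
        rfl

theorem ccLength_le_lintegral {a b : ℝ} {γ : ℝ → Eu n} {h : ℝ → Eu m}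
    (hh : IsControlOf X a b γ h) :
    ccLength X a b γ ≤ ∫⁻ t in Icc a b, (‖h t‖₊ : ℝ≥0∞) :=
  iInf₂_le h hh

theorem ofReal_sub_le_ccLength_of_calibration (hW : IsOpen W) (hφ : ContDiffOn ℝ 1 φ W)
    (hcal : ∀ q ∈ W, ∀ h : Eu m, fderiv ℝ φ q (∑ j, h j • X j q) ≤ ‖h‖)
    {c d : ℝ} (hcd : c ≤ d) {κ : ℝ → Eu n} (hκW : ∀ t ∈ Icc c d, κ t ∈ W) :
    ENNReal.ofReal (φ (κ d) - φ (κ c)) ≤ ccLength X c d κ :=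
  le_iInf₂ fun _ hg ↦ ofReal_sub_le_lintegral_of_calibration hW hφ hcal hcd hκW hg

end Calibration

theorem calibration_implies_minimality_general
    (n m : ℕ)
    (X : Fin m → Eu n → Eu n)
    (W : Set (Eu n)) (hW : IsOpen W)
    (φ : Eu n → ℝ) (hφ : ContDiffOn ℝ 1 φ W)
    (hcal : ∀ q ∈ W, ∀ h : Eu m, fderiv ℝ φ q (∑ j, h j • X j q) ≤ ‖h‖)
    (a b : ℝ) (hab : a ≤ b)
    (γ₀ : ℝ → Eu n) (h₀ : ℝ → Eu m)
    (hγ₀W : ∀ t ∈ Icc a b, γ₀ t ∈ W)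
    (hctrl : IsControlOf X a b γ₀ h₀)
    (hae : ∀ᵐ t ∂(volume.restrict (Icc a b)),
      ‖h₀ t‖ = 1 ∧ fderiv ℝ φ (γ₀ t) (∑ j, h₀ t j • X j (γ₀ t)) = 1) :
    ccLength X a b γ₀ = ENNReal.ofReal (b - a) ∧
    ∀ (c d : ℝ) (κ : ℝ → Eu n), c ≤ d →
      (∀ t ∈ Icc c d, κ t ∈ W) →
      (∃ hκ, IsControlOf X c d κ hκ) →
      κ c = γ₀ a → κ d = γ₀ b →
      ENNReal.ofReal (b - a) ≤ ccLength X c d κ := by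
  have hφγ₀ : φ (γ₀ b) - φ (γ₀ a) = b - a := by
    rw [← (integral_fderiv_apply_eq_sub hW hφ hab (hctrl.intervalIntegrable hab) hctrl.2.2
      hγ₀W).2, intervalIntegral.integral_of_le hab, ← integral_Icc_eq_integral_Ioc,
      integral_congr_ae (hae.mono fun _ ht ↦ ht.2)]
    simp [hab]
  have hlen : ∫⁻ t in Icc a b, (‖h₀ t‖₊ : ℝ≥0∞) = ENNReal.ofReal (b - a) := by
    rw [lintegral_congr_ae (g := fun _ ↦ 1) (hae.mono fun _ ht ↦ by
      rw [← enorm_eq_nnnorm, ← ofReal_norm, ht.1, ENNReal.ofReal_one]),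
      setLIntegral_one, Real.volume_Icc]
  have hmin : ∀ (c d : ℝ) (κ : ℝ → Eu n), c ≤ d → (∀ t ∈ Icc c d, κ t ∈ W) →
      κ c = γ₀ a → κ d = γ₀ b → ENNReal.ofReal (b - a) ≤ ccLength X c d κ := by
    intro c d κ hcd hκW hκc hκd
    simpa [hκc, hκd, hφγ₀] using ofReal_sub_le_ccLength_of_calibration hW hφ hcal hcd hκW
  exact ⟨le_antisymm (hlen ▸ ccLength_le_lintegral hctrl) (hmin a b γ₀ hab hγ₀W rfl rfl),
    fun c d κ hcd hκW _ ↦ hmin c d κ hcd hκW⟩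

/-- **A calibration implies length-minimality**: if `φ` is `C¹` on the open set
`W ⊆ U` with `⟨dφ(q), Σⱼ hⱼ Xⱼ(q)⟩ ≤ |h|` on `W`, and `γ₀ : [a,b] → W` is an
admissible curve whose control `h₀` satisfies `|h₀(t)| = 1` and
`⟨dφ(γ₀(t)), γ₀'(t)⟩ = 1` a.e., then `L(γ₀) = b - a` and every admissible curve
in `W` with the same endpoints has length at least `b - a`. -/
theorem calibration_implies_minimality
    (n m : ℕ) (hm : 1 ≤ m) (hmn : m ≤ n)
    (U : Set (Eu n)) (hU : IsOpen U)
    (X : Fin m → Eu n → Eu n)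
    (hX : ∀ j, IsC11On (X j) U)
    (hindep : ∀ q ∈ U, LinearIndependent ℝ (fun j => X j q))
    (W : Set (Eu n)) (hW : IsOpen W) (hWU : W ⊆ U)
    (φ : Eu n → ℝ) (hφ : ContDiffOn ℝ 1 φ W)
    (hcal : ∀ q ∈ W, ∀ h : Eu m, fderiv ℝ φ q (∑ j, h j • X j q) ≤ ‖h‖)
    (a b : ℝ) (hab : a ≤ b)
    (γ₀ : ℝ → Eu n) (h₀ : ℝ → Eu m)
    (hγ₀W : ∀ t ∈ Icc a b, γ₀ t ∈ W)
    (hctrl : IsControlOf X a b γ₀ h₀)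
    (hae : ∀ᵐ t ∂(volume.restrict (Icc a b)),
      ‖h₀ t‖ = 1 ∧ fderiv ℝ φ (γ₀ t) (∑ j, h₀ t j • X j (γ₀ t)) = 1) :
    ccLength X a b γ₀ = ENNReal.ofReal (b - a) ∧
    ∀ (c d : ℝ) (κ : ℝ → Eu n), c ≤ d →
      (∀ t ∈ Icc c d, κ t ∈ W) →
      (∃ hκ, IsControlOf X c d κ hκ) →
      κ c = γ₀ a → κ d = γ₀ b →
      ENNReal.ofReal (b - a) ≤ ccLength X c d κ :=
  calibration_implies_minimality_general n m X W hW φ hφ hcal a b hab γ₀ h₀ hγ₀W hctrl hae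

end
end

section
/- (The calibration 1-form is exact.) Let I ⊆ ℝ be an open interval containing 0 and U' ⊆ ℝ^{n−1} open. Suppose Q : I × U' → ℝⁿ and Λ : I × U' → (ℝⁿ)* are C¹ maps such that the mixed second partial derivatives ∂ₜ∂_{x'ⱼ}Q and ∂_{x'ⱼ}∂ₜQ exist and coincide (e.g. Q of class C^{1,1}), and assume: for each fixed x' ∈ U' the curve t ↦ (Q(t,x'), Λ(t,x')) is a normal extremal; Σᵢ ⟨Λ(t,x'), Xᵢ(Q(t,x'))⟩² = 1 for all (t,x') ∈ I × U'; and ⟨Λ(0,x'), ∂Q/∂x'ⱼ(0,x')⟩ = 0 for every j = 1, …, n−1 and every x' ∈ U'. Then for all (t,x') ∈ I × U': ⟨Λ(t,x'), ∂Q/∂x'ⱼ(t,x')⟩ = 0 for every j, and ⟨Λ(t,x'), ∂Q/∂t(t,x')⟩ = 1. In particular, if Q is a diffeomorphism of I × U' onto an open set W ⊆ ℝⁿ, then the 1-form x ↦ Λ(Q⁻¹(x)) on W is exact, with primitive the t-component of Q⁻¹. -/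
/-!
Along each extremal, `⟨Λ, ∂Q/∂x'ⱼ⟩` is constant in `t`. Its `t`-derivative is
`⟨λ̇, ∂ⱼQ⟩ + ⟨Λ, ∂ⱼ∂ₜQ⟩`, and the second term is computed without ever differentiating `Λ` in
`x'`: for fixed `(t, x')` the function `y ↦ ⟨Λ(t,x'), ∂ₜQ(t,y)⟩ - ½ Σᵢ ⟨Λ(t,x'), Xᵢ(Q(t,y))⟩²` is
at most `½` (since `∂ₜQ(t,y) = Σᵢ ⟨Λ(t,y), Xᵢ⟩ Xᵢ` and `Σᵢ ⟨Λ(t,y), Xᵢ⟩² = 1`), with equality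
at `y = x'`, so its derivative vanishes there. The identity `⟨Λ, ∂ₜQ⟩ = 2H = 1` is immediate.

For the exactness, `Q` is only separately differentiable in `t` and `x'`, so the chain rule cannot
be applied to `Q ∘ Q⁻¹`. Instead, the speed bound makes `Q` locally Lipschitz in `t` uniformly in
`x'`, which forces `D(Q⁻¹)` to be injective. An injective map with surjective derivatives has open
image (minimize `‖Q⁻¹ z - q‖` over a small ball), so `Q⁻¹ ∘ Q = id` near `Q⁻¹ x`. Differentiating
this along the coordinate lines shows that `D(Q⁻¹)` inverts `(a, w) ↦ a ∂ₜQ + ∂ₓQ w`, whose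
`t`-component is `Λ` by the first part.
-/

open MeasureTheory Set
open scoped ENNReal

noncomputable section

/-- `f` is of class `C^{1,1}`: continuously differentiable with locally
Lipschitz derivative. -/
def IsC11 {n : ℕ} (f : Eu n → Eu n) : Prop :=
  ContDiff ℝ 1 f ∧
  ∀ q, ∃ (K : NNReal) (V : Set (Eu n)), V ∈ nhds q ∧
    LipschitzOnWith K (fderiv ℝ f) V

/-- The sub-Riemannian Hamiltonian `H(q,λ) = (1/2) Σᵢ ⟨λ, Xᵢ(q)⟩²`. -/
def srHamiltonian {n m : ℕ} (X : Fin m → Eu n → Eu n) (q : Eu n)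
    (l : Eu n →L[ℝ] ℝ) : ℝ :=
  (1 / 2) * ∑ i, (l (X i q)) ^ 2

/-- `(q, λ)` is a normal extremal on `[a,b]`: a `C¹` solution of Hamilton's
equations `q̇ = ∂H/∂λ(q,λ)`, `λ̇ = -∂H/∂q(q,λ)` for the sub-Riemannian
Hamiltonian. -/
def IsNormalExtremal {n m : ℕ} (X : Fin m → Eu n → Eu n) (a b : ℝ)
    (q : ℝ → Eu n) (lam : ℝ → (Eu n →L[ℝ] ℝ)) : Prop :=
  ∀ t ∈ Icc a b,
    HasDerivWithinAt q (∑ i, lam t (X i (q t)) • X i (q t)) (Icc a b) t ∧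
    HasDerivWithinAt lam
      (-(∑ i, lam t (X i (q t)) • ((lam t).comp (fderiv ℝ (X i) (q t)))))
      (Icc a b) t

open Filter Topology Asymptotics

section Calibration

variable {ι V P : Type*} [Fintype ι] [NormedAddCommGroup V] [NormedSpace ℝ V]
  [NormedAddCommGroup P] [NormedSpace ℝ P]

theorem sum_mul_sub_half_sum_sq_le {a b : ι → ℝ}
    (ha : ∑ i, a i ^ 2 = 1) : ∑ i, a i * b i - 1 / 2 * ∑ i, b i ^ 2 ≤ 1 / 2 := by
  have h : 0 ≤ ∑ i, (a i - b i) ^ 2 := Finset.sum_nonneg fun i _ => sq_nonneg _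
  simp only [sub_sq, Finset.sum_add_distrib, Finset.sum_sub_distrib, mul_assoc,
    ← Finset.mul_sum] at h
  linarith

theorem apply_fderiv_eq_of_isLocalMax {X : ι → V → V} {q w : P → V} {q' w' : P →L[ℝ] V}
    {ℓ : V →L[ℝ] ℝ} {y₀ : P} (hX : ∀ i, DifferentiableAt ℝ (X i) (q y₀))
    (hq : HasFDerivAt q q' y₀) (hw : HasFDerivAt w w' y₀)
    (hmax : IsLocalMax (fun y => ℓ (w y) - 1 / 2 * ∑ i, ℓ (X i (q y)) ^ 2) y₀) (v : P) :
    ℓ (w' v) = ∑ i, ℓ (X i (q y₀)) * ℓ (fderiv ℝ (X i) (q y₀) (q' v)) := by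
  have hXq : ∀ i, HasFDerivAt (fun y => ℓ (X i (q y)))
      (ℓ.comp ((fderiv ℝ (X i) (q y₀)).comp q')) y₀ := fun i =>
    ℓ.hasFDerivAt.comp y₀ ((hX i).hasFDerivAt.comp y₀ hq)
  have hderiv := hmax.hasFDerivAt_eq_zero
    ((ℓ.hasFDerivAt.comp y₀ hw).sub (.const_mul (.fun_sum fun i _ => (hXq i).pow 2) (1 / 2)))
  have h := congrArg (· v) hderiv
  simp only [sub_apply, smul_apply, sum_apply, ContinuousLinearMap.comp_apply, zero_apply,
    smul_eq_mul, nsmul_eq_mul, pow_one, Nat.cast_ofNat, Nat.add_one_sub_one, mul_assoc,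
    ← Finset.mul_sum] at h
  linarith

theorem apply_sum_apply_smul_eq_one {ℓ : V →L[ℝ] ℝ} {x : ι → V} (h : ∑ i, ℓ (x i) ^ 2 = 1) :
    ℓ (∑ i, ℓ (x i) • x i) = 1 := by
  simpa [sq] using h

theorem apply_partial_eq_zero_of_normalExtremal {X : ι → V → V} {I : Set ℝ} {U : Set P}
    {Q Qt : ℝ → P → V} {Λ : ℝ → P → V →L[ℝ] ℝ} {Qx M : ℝ → P → P →L[ℝ] V}
    (hX : ∀ i, Differentiable ℝ (X i)) (hI : IsOpen I) (hIconn : I.OrdConnected) (hI0 : 0 ∈ I)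
    (hU : IsOpen U) (hQx : ∀ t ∈ I, ∀ y ∈ U, HasFDerivAt (Q t) (Qx t y) y)
    (hMt : ∀ t ∈ I, ∀ y ∈ U, HasDerivAt (fun s => Qx s y) (M t y) t)
    (hMx : ∀ t ∈ I, ∀ y ∈ U, HasFDerivAt (Qt t) (M t y) y)
    (hvel : ∀ t ∈ I, ∀ y ∈ U, Qt t y = ∑ i, Λ t y (X i (Q t y)) • X i (Q t y))
    (hcov : ∀ t ∈ I, ∀ y ∈ U, HasDerivAt (fun s => Λ s y)
      (-∑ i, Λ t y (X i (Q t y)) • (Λ t y).comp (fderiv ℝ (X i) (Q t y))) t)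
    (hham : ∀ t ∈ I, ∀ y ∈ U, ∑ i, Λ t y (X i (Q t y)) ^ 2 = 1)
    (hinit : ∀ y ∈ U, ∀ v, Λ 0 y (Qx 0 y v) = 0) :
    ∀ t ∈ I, ∀ y ∈ U, ∀ v, Λ t y (Qx t y v) = 0 := by
  have hmax : ∀ t ∈ I, ∀ y ∈ U, IsLocalMax
      (fun y' => Λ t y (Qt t y') - 1 / 2 * ∑ i, Λ t y (X i (Q t y')) ^ 2) y := by
    intro t ht y hy
    filter_upwards [hU.mem_nhds hy] with y' hy'
    have h₁ : Λ t y (Qt t y) = 1 := by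
      rw [hvel t ht y hy]; exact apply_sum_apply_smul_eq_one (hham t ht y hy)
    rw [h₁, hham t ht y hy, hvel t ht y' hy']
    simp only [map_sum, map_smul, smul_eq_mul]
    linarith [sum_mul_sub_half_sum_sq_le (b := fun i => Λ t y (X i (Q t y'))) (hham t ht y' hy')]
  have hconst : ∀ y ∈ U, ∀ v, ∀ t ∈ I, HasDerivAt (fun s => Λ s y (Qx s y v)) 0 t := by
    intro y hy v t ht
    have h := (hcov t ht y hy).clm_apply ((hMt t ht y hy).clm_apply (hasDerivAt_const t v))
    refine h.congr_deriv ?_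
    simp only [map_zero, add_zero]
    rw [apply_fderiv_eq_of_isLocalMax (fun i => (hX i).differentiableAt) (hQx t ht y hy)
      (hMx t ht y hy) (hmax t ht y hy) v]
    simp
  intro t ht y hy v
  rw [← hinit y hy v]
  refine hI.is_const_of_deriv_eq_zero hIconn.isPreconnected
    (fun s hs => (hconst y hy v s hs).differentiableAt.differentiableWithinAt)
    (fun s hs => (hconst y hy v s hs).deriv) ht hI0

theorem norm_sum_smul_le_sum_norm_of_sum_sq_eq_one {c : ι → ℝ} {v : ι → V}
    (h : ∑ i, c i ^ 2 = 1) : ‖∑ i, c i • v i‖ ≤ ∑ i, ‖v i‖ := by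
  refine (norm_sum_le _ _).trans (Finset.sum_le_sum fun i _ => ?_)
  have hci : c i ^ 2 ≤ 1 :=
    h ▸ Finset.single_le_sum (fun j _ => sq_nonneg (c j)) (Finset.mem_univ i)
  rw [norm_smul, Real.norm_eq_abs]
  exact mul_le_of_le_one_left (norm_nonneg _) ((sq_le_one_iff_abs_le_one _).1 hci)

end Calibration

section RightInverse

variable {E F : Type*} [NormedAddCommGroup E] [NormedSpace ℝ E]
  [NormedAddCommGroup F] [NormedSpace ℝ F]

theorem norm_sub_le_of_norm_deriv_lt_near {γ γ' : ℝ → F} {z : F} {a b r K : ℝ} (hab : a ≤ b)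
    (hK : 0 ≤ K) (hγ : ∀ τ ∈ Icc a b, HasDerivAt γ (γ' τ) τ)
    (hspeed : ∀ τ ∈ Icc a b, ‖γ τ - z‖ < r → ‖γ' τ‖ < K)
    (hstart : ‖γ a - z‖ + K * (b - a) < r) :
    ‖γ b - γ a‖ ≤ K * (b - a) := by
  refine image_norm_le_of_norm_deriv_right_lt_deriv_boundary' (f := fun τ => γ τ - γ a)
    (B := fun τ => K * (τ - a)) (B' := fun _ => K)
    (fun τ hτ => ((hγ τ hτ).continuousAt.sub continuousAt_const).continuousWithinAt)
    (fun τ hτ => ((hγ τ (Ico_subset_Icc_self hτ)).sub_const (γ a)).hasDerivWithinAt)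
    (by simp) (by fun_prop)
    (fun τ _ => by simpa using ((hasDerivAt_id τ).sub_const a).const_mul K |>.hasDerivWithinAt)
    (fun τ hτ hnorm => hspeed τ (Ico_subset_Icc_self hτ) ?_) (right_mem_Icc.2 hab)
  calc ‖γ τ - z‖ ≤ ‖γ τ - γ a‖ + ‖γ a - z‖ := norm_sub_le_norm_sub_add_norm_sub _ _ _
    _ ≤ K * (b - a) + ‖γ a - z‖ := by
        rw [hnorm]; gcongr; exact hτ.2.le
    _ < r := by linarith

theorem norm_sub_le_mul_abs_of_norm_deriv_lt_near {γ γ' : ℝ → F} {z : F} {a δ r K : ℝ}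
    (hK : 0 ≤ K) (hγ : ∀ τ ∈ Metric.closedBall a δ, HasDerivAt γ (γ' τ) τ)
    (hspeed : ∀ τ ∈ Metric.closedBall a δ, ‖γ τ - z‖ < r → ‖γ' τ‖ < K)
    (hstart : ‖γ a - z‖ + K * δ < r) :
    ∀ s ∈ Metric.closedBall a δ, ‖γ s - γ a‖ ≤ K * |s - a| := by
  intro s hs
  have hsδ : |s - a| ≤ δ := by rwa [Metric.mem_closedBall, Real.dist_eq] at hs
  have hstart' : ‖γ a - z‖ + K * |s - a| < r := by nlinarith
  rcases le_total a s with has | hsa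
  · have hsub : Icc a s ⊆ Metric.closedBall a δ := fun τ hτ => by
      rw [Metric.mem_closedBall, Real.dist_eq, abs_le] at *
      constructor <;> linarith [hτ.1, hτ.2]
    rw [abs_of_nonneg (sub_nonneg.2 has)] at hstart' ⊢
    exact norm_sub_le_of_norm_deriv_lt_near has hK (fun τ hτ => hγ τ (hsub hτ))
      (fun τ hτ => hspeed τ (hsub hτ)) hstart'
  · -- run the curve backwards: `τ ↦ γ (2a - τ)` on `[a, 2a - s]`
    have hsub : ∀ τ ∈ Icc a (2 * a - s), 2 * a - τ ∈ Metric.closedBall a δ := fun τ hτ => by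
      rw [Metric.mem_closedBall, Real.dist_eq, abs_le] at *
      constructor <;> linarith [hτ.1, hτ.2]
    rw [abs_of_nonpos (sub_nonpos.2 hsa)] at hstart' ⊢
    have h := norm_sub_le_of_norm_deriv_lt_near (γ := fun τ => γ (2 * a - τ))
      (γ' := fun τ => -γ' (2 * a - τ)) (z := z) (b := 2 * a - s) (by linarith) hK
      (fun τ hτ => by
        simpa [Function.comp_def] using
          (hγ _ (hsub τ hτ)).scomp τ ((hasDerivAt_id τ).const_sub (2 * a)))
      (fun τ hτ => by simpa using hspeed _ (hsub τ hτ)) (by ring_nf at hstart' ⊢; linarith)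
    ring_nf at h ⊢
    simpa using h

theorem exists_eventually_norm_sub_le_mul_abs {Y : Type*} [TopologicalSpace Y]
    {f f' : ℝ → Y → F} {G : F → ℝ} {I : Set ℝ} {U : Set Y} {t₀ : ℝ} {y₀ : Y}
    (hI : I ∈ 𝓝 t₀) (hU : U ∈ 𝓝 y₀)
    (hf : ∀ t ∈ I, ∀ y ∈ U, HasDerivAt (fun s => f s y) (f' t y) t)
    (hG : ContinuousAt G (f t₀ y₀)) (hspeed : ∀ t ∈ I, ∀ y ∈ U, ‖f' t y‖ ≤ G (f t y))
    (hcont : ContinuousAt (f t₀) y₀) :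
    ∃ K, ∀ᶠ p in 𝓝 (t₀, y₀), ‖f p.1 p.2 - f t₀ p.2‖ ≤ K * |p.1 - t₀| := by
  set z := f t₀ y₀
  set K := |G z| + 1
  have hK : 0 < K := by positivity
  obtain ⟨r, hr, hGr⟩ : ∃ r > 0, ∀ w, ‖w - z‖ < r → G w < K := by
    have := hG.eventually (gt_mem_nhds (lt_of_le_of_lt (le_abs_self (G z)) (lt_add_one _)))
    obtain ⟨r, hr, h⟩ := Metric.eventually_nhds_iff.1 this
    exact ⟨r, hr, fun w hw => h (by rwa [dist_eq_norm])⟩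
  obtain ⟨δ, hδ, hδI, hδK⟩ : ∃ δ > 0, Metric.closedBall t₀ δ ⊆ I ∧ K * δ < r / 2 := by
    have hsmall : ∀ᶠ δ in 𝓝 (0 : ℝ), K * δ < r / 2 :=
      (continuous_const.mul continuous_id).tendsto' 0 0 (by simp) |>.eventually
        (gt_mem_nhds (half_pos hr))
    obtain ⟨δ, ⟨h1, h2⟩, hδ⟩ := (((eventually_closedBall_subset hI).and hsmall).filter_mono
      nhdsWithin_le_nhds |>.and (self_mem_nhdsWithin (s := Ioi 0))).exists
    exact ⟨δ, hδ, h1, h2⟩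
  refine ⟨K, ?_⟩
  have hnear : ∀ᶠ y in 𝓝 y₀, y ∈ U ∧ ‖f t₀ y - z‖ < r / 2 := by
    refine Filter.Eventually.and hU
      ((hcont.eventually (Metric.ball_mem_nhds z (half_pos hr))).mono fun y hy => ?_)
    rwa [dist_eq_norm] at hy
  filter_upwards [Filter.Eventually.prod_nhds (Metric.closedBall_mem_nhds t₀ hδ) hnear]
    with ⟨σ, y⟩ ⟨hσ, hyU, hyz⟩
  exact norm_sub_le_mul_abs_of_norm_deriv_lt_near hK.le
    (fun τ hτ => hf τ (hδI hτ) y hyU)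
    (fun τ hτ hτz => (hspeed τ (hδI hτ) y hyU).trans_lt (hGr _ hτz)) (by linarith) σ hσ

theorem injective_fderiv_of_rightInverse {f : ℝ → E → F} {g : F → ℝ × E} {z : F}
    {fx : E →L[ℝ] F} {K : ℝ} (hg : DifferentiableAt ℝ g z)
    (hfg : ∀ᶠ y in 𝓝 z, f (g y).1 (g y).2 = y) (hfx : HasFDerivAt (f (g z).1) fx (g z).2)
    (hlip : ∀ᶠ p in 𝓝 (g z), ‖f p.1 p.2 - f (g z).1 p.2‖ ≤ K * |p.1 - (g z).1|) :
    Function.Injective (fderiv ℝ g z) := by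
  refine (injective_iff_map_eq_zero _).2 fun v hv => ?_
  set P : ℝ → ℝ × E := fun ε => g (z + ε • v)
  have hline : HasDerivAt (fun ε : ℝ => z + ε • v) v 0 := by
    simpa using ((hasDerivAt_id (0 : ℝ)).smul_const v).const_add z
  have hline0 : Tendsto (fun ε : ℝ => z + ε • v) (𝓝 0) (𝓝 z) := by
    simpa using hline.continuousAt.tendsto
  have hP : HasDerivAt P 0 0 := by
    have h := hg.hasFDerivAt.comp_hasDerivAt_of_eq 0 hline (by simp)
    rwa [hv] at h
  have hP0 : P 0 = g z := by simp [P]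
  have hB : HasDerivAt (fun ε => f (g z).1 (P ε).2) 0 0 := by
    simpa [Function.comp_def] using hfx.comp_hasDerivAt_of_eq 0 hP.snd (by rw [hP0])
  have hA : HasDerivAt (fun ε => f (P ε).1 (P ε).2 - f (g z).1 (P ε).2) 0 0 := by
    have hPo : (fun ε => P ε - g z) =o[𝓝 0] fun ε => ε := by
      simpa [hP0] using hasDerivAt_iff_isLittleO.1 hP
    have hO : (fun ε => f (P ε).1 (P ε).2 - f (g z).1 (P ε).2) =O[𝓝 0] fun ε => P ε - g z := by
      refine IsBigO.of_bound |K| ?_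
      filter_upwards [(hP0 ▸ hP.continuousAt.tendsto).eventually hlip] with ε hε
      calc _ ≤ K * |(P ε).1 - (g z).1| := hε
        _ ≤ |K| * ‖P ε - g z‖ := by
          refine mul_le_mul (le_abs_self K) ?_ (abs_nonneg _) (abs_nonneg K)
          simpa using norm_fst_le (P ε - g z)
    refine hasDerivAt_iff_isLittleO.2 ?_
    simpa [hP0] using hO.trans_isLittleO hPo
  have hsum : (fun ε : ℝ => z + ε • v) =ᶠ[𝓝 0]
      fun ε => (f (P ε).1 (P ε).2 - f (g z).1 (P ε).2) + f (g z).1 (P ε).2 := by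
    filter_upwards [hline0.eventually hfg] with ε hε
    simp [P, hε]
  simpa using hline.unique ((hA.add hB).congr_of_eventuallyEq hsum)

theorem eq_of_isLocalMin_norm_sub {p : E → F} {D : E →L[ℝ] F} {z : E} {q : F}
    (hp : HasFDerivAt p D z) (hD : Function.Surjective D)
    (hmin : IsLocalMin (fun y => ‖p y - q‖) z) : p z = q := by
  by_contra hne
  set d := ‖p z - q‖
  have hd : 0 < d := norm_pos_iff.2 (sub_ne_zero.2 hne)
  obtain ⟨w, hw⟩ := hD (q - p z)
  -- moving from `z` along `w` shrinks `p · - q` to first order by the factor `1 - s`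
  have hline : HasDerivAt (fun s : ℝ => p (z + s • w)) (q - p z) 0 := by
    have h := hp.comp_hasDerivAt_of_eq 0
      (((hasDerivAt_id (0 : ℝ)).smul_const w).const_add z) (by simp)
    simpa [Function.comp_def, hw] using h
  have hsmall : ∀ᶠ s in 𝓝 (0 : ℝ),
      ‖p (z + s • w) - p z - s • (q - p z)‖ ≤ d / 2 * ‖s‖ := by
    simpa using (hasDerivAt_iff_isLittleO.1 hline).def (half_pos hd)
  have hmin' : ∀ᶠ s in 𝓝 (0 : ℝ), d ≤ ‖p (z + s • w) - q‖ :=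
    (Continuous.tendsto' (f := fun s : ℝ => z + s • w) (by fun_prop) 0 z (by simp)).eventually hmin
  obtain ⟨s, ⟨⟨hs_small, hs_min⟩, hs1⟩, hs0⟩ := (((hsmall.and hmin').and
    (gt_mem_nhds one_pos)).filter_mono nhdsWithin_le_nhds |>.and
    (self_mem_nhdsWithin (s := Ioi 0))).exists
  have hs0 : (0 : ℝ) < s := hs0
  have hsplit : p (z + s • w) - q =
      (1 - s) • (p z - q) + (p (z + s • w) - p z - s • (q - p z)) := by
    simp only [sub_smul, one_smul, smul_sub]; abel
  have hbound : ‖p (z + s • w) - q‖ ≤ (1 - s) * d + d / 2 * s := by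
    rw [hsplit]
    refine (norm_add_le _ _).trans (add_le_add ?_ ?_)
    · rw [norm_smul, Real.norm_of_nonneg (by linarith)]
    · simpa [abs_of_pos hs0] using hs_small
  nlinarith

theorem isOpen_image_of_surjective_fderiv [ProperSpace E] {p : E → F} {W : Set E}
    (hW : IsOpen W) (hinj : InjOn p W) (hp : ∀ z ∈ W, DifferentiableAt ℝ p z)
    (hsurj : ∀ z ∈ W, Function.Surjective (fderiv ℝ p z)) : IsOpen (p '' W) := by
  refine Metric.isOpen_iff.2 ?_
  rintro _ ⟨x, hx, rfl⟩
  obtain ⟨r, hr, hrW⟩ := Metric.nhds_basis_closedBall.mem_iff.1 (hW.mem_nhds hx)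
  have hcont : ContinuousOn p (Metric.closedBall x r) :=
    fun z hz => (hp z (hrW hz)).continuousAt.continuousWithinAt
  obtain ⟨m, hm, hsphere⟩ : ∃ m > 0, ∀ z ∈ Metric.sphere x r, m ≤ ‖p z - p x‖ := by
    refine (isCompact_sphere x r).exists_forall_le'
      ((hcont.mono Metric.sphere_subset_closedBall).sub continuousOn_const).norm
      fun z hz => norm_pos_iff.2 (sub_ne_zero.2 fun h => ?_)
    have hzx := hinj (hrW (Metric.sphere_subset_closedBall hz)) hx h
    simp only [hzx, Metric.mem_sphere, dist_self] at hz
    exact hr.ne hz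
  refine ⟨m / 2, half_pos hm, fun q hq => ?_⟩
  rw [Metric.mem_ball, dist_eq_norm] at hq
  obtain ⟨z₀, hz₀, hmin⟩ := (isCompact_closedBall x r).exists_isMinOn
    ⟨x, Metric.mem_closedBall_self hr.le⟩ (hcont.sub continuousOn_const).norm
  -- the minimum is not attained on the sphere, where `‖p · - q‖ > m / 2 > ‖p x - q‖`
  have hz₀ball : z₀ ∈ Metric.ball x r := by
    by_contra h
    have hfar := hsphere z₀ (Metric.mem_sphere.2
      ((le_iff_eq_or_lt.1 (Metric.mem_closedBall.1 hz₀)).resolve_right h))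
    have hle : ‖p z₀ - q‖ ≤ ‖p x - q‖ := hmin (Metric.mem_closedBall_self hr.le)
    have htri := norm_sub_le_norm_sub_add_norm_sub (p z₀) q (p x)
    linarith [norm_sub_rev (p x) q]
  refine ⟨z₀, hrW hz₀, eq_of_isLocalMin_norm_sub (hp z₀ (hrW hz₀)).hasFDerivAt
    (hsurj z₀ (hrW hz₀)) (hmin.isLocalMin ?_)⟩
  exact mem_of_superset (Metric.isOpen_ball.mem_nhds hz₀ball) Metric.ball_subset_closedBall

theorem fderiv_apply_eq_of_comp_eventuallyEq {G : Type*} [NormedAddCommGroup G]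
    [NormedSpace ℝ G] {g : F → G} {c : ℝ → F} {γ : ℝ → G} {x c' : F} {γ' : G} {s₀ : ℝ}
    (hg : DifferentiableAt ℝ g x) (hc : HasDerivAt c c' s₀) (hcx : x = c s₀)
    (hγ : HasDerivAt γ γ' s₀) (hgc : ∀ᶠ s in 𝓝 s₀, g (c s) = γ s) : fderiv ℝ g x c' = γ' :=
  (hg.hasFDerivAt.comp_hasDerivAt_of_eq s₀ hc hcx).unique (hγ.congr_of_eventuallyEq hgc)

theorem hasFDerivAt_fst_of_rightInverse {f : ℝ → E → F} {g : F → ℝ × E} {x ft : F}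
    {fx : E →L[ℝ] F} {ℓ : F →L[ℝ] ℝ} (hg : DifferentiableAt ℝ g x)
    (hinj : Function.Injective (fderiv ℝ g x)) (hgf : ∀ᶠ p in 𝓝 (g x), g (f p.1 p.2) = p)
    (hfg : f (g x).1 (g x).2 = x) (hft : HasDerivAt (fun s => f s (g x).2) ft (g x).1)
    (hfx : HasFDerivAt (f (g x).1) fx (g x).2) (hℓt : ℓ ft = 1) (hℓx : ∀ w, ℓ (fx w) = 0) :
    HasFDerivAt (fun y => (g y).1) ℓ x := by
  have hnear : ∀ {c : ℝ → ℝ × E} {s₀ : ℝ}, Continuous c → c s₀ = g x →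
      ∀ᶠ s in 𝓝 s₀, g (f (c s).1 (c s).2) = c s := fun hc hc₀ =>
    (hc₀ ▸ hc.tendsto _).eventually hgf
  have hDt : fderiv ℝ g x ft = (1, 0) :=
    fderiv_apply_eq_of_comp_eventuallyEq hg hft hfg.symm
      ((hasDerivAt_id _).prodMk (hasDerivAt_const _ _))
      (hnear (c := fun s => (s, (g x).2)) (by fun_prop) rfl)
  have hDx : ∀ w, fderiv ℝ g x (fx w) = (0, w) := by
    intro w
    have hline : HasDerivAt (fun s : ℝ => (g x).2 + s • w) w 0 := by
      simpa using ((hasDerivAt_id (0 : ℝ)).smul_const w).const_add (g x).2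
    exact fderiv_apply_eq_of_comp_eventuallyEq (c := fun s => f (g x).1 ((g x).2 + s • w)) hg
      (hfx.comp_hasDerivAt_of_eq 0 hline (by simp)) (by simp [hfg])
      ((hasDerivAt_const _ _).prodMk hline)
      (hnear (c := fun s => ((g x).1, (g x).2 + s • w)) (by fun_prop) (by simp))
  have hinv : ∀ v, v = (fderiv ℝ g x v).1 • ft + fx (fderiv ℝ g x v).2 := fun v =>
    hinj (by simp [hDt, hDx])
  refine hg.hasFDerivAt.fst.congr_fderiv (ContinuousLinearMap.ext fun v => ?_)
  conv_rhs => rw [hinv v]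
  simp [hℓt, hℓx]

end RightInverse

/-- **The calibration 1-form is exact**: let `I ∋ 0` be an open interval,
`U'` open, and `Q, Λ` be `C¹` in `(t,x')` with existing and coinciding mixed
second partials of `Q`; if for each `x'` the curve `t ↦ (Q(t,x'), Λ(t,x'))` is a
normal extremal, `Σᵢ ⟨Λ, Xᵢ(Q)⟩² = 1` on `I × U'`, and `Λ(0,x')` annihilates
`∂Q/∂x'ⱼ(0,x')`, then `⟨Λ(t,x'), ∂Q/∂x'ⱼ(t,x')⟩ = 0` and
`⟨Λ(t,x'), ∂Q/∂t(t,x')⟩ = 1` on `I × U'`; in particular, if `Q` is a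
diffeomorphism onto an open set `W`, the 1-form `x ↦ Λ(Q⁻¹(x))` on `W` is exact
with primitive the `t`-component of `Q⁻¹`. -/
theorem calibration_one_form_exact
    (n m : ℕ) (X : Fin m → Eu (n + 1) → Eu (n + 1)) (hX : ∀ j, IsC11 (X j))
    (I : Set ℝ) (hIopen : IsOpen I) (hI0 : (0 : ℝ) ∈ I) (hIconn : I.OrdConnected)
    (U' : Set (Eu n)) (hU' : IsOpen U')
    (Q : ℝ → Eu n → Eu (n + 1)) (Λ : ℝ → Eu n → (Eu (n + 1) →L[ℝ] ℝ))
    -- the partial derivatives of `Q`: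
    (Qt : ℝ → Eu n → Eu (n + 1)) (Qx : ℝ → Eu n → (Eu n →L[ℝ] Eu (n + 1)))
    (hQt : ∀ t ∈ I, ∀ x' ∈ U', HasDerivAt (fun s => Q s x') (Qt t x') t)
    (hQx : ∀ t ∈ I, ∀ x' ∈ U', HasFDerivAt (fun y => Q t y) (Qx t x') x')
    -- the mixed second partial derivatives of `Q` exist and coincide:
    (hmixed : ∃ M : ℝ → Eu n → (Eu n →L[ℝ] Eu (n + 1)),
      (∀ t ∈ I, ∀ x' ∈ U', HasDerivAt (fun s => Qx s x') (M t x') t) ∧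
      (∀ t ∈ I, ∀ x' ∈ U', HasFDerivAt (fun y => Qt t y) (M t x') x'))
    -- for each fixed `x'`, `t ↦ (Q(t,x'), Λ(t,x'))` is a normal extremal:
    (hext : ∀ x' ∈ U', ∀ t ∈ I,
      HasDerivAt (fun s => Q s x')
        (∑ i, Λ t x' (X i (Q t x')) • X i (Q t x')) t ∧
      HasDerivAt (fun s => Λ s x')
        (-(∑ i, Λ t x' (X i (Q t x')) •
          ((Λ t x').comp (fderiv ℝ (X i) (Q t x'))))) t)
    -- unit Hamiltonian:
    (hham : ∀ t ∈ I, ∀ x' ∈ U', ∑ i, (Λ t x' (X i (Q t x'))) ^ 2 = 1)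
    -- `Λ(0,x')` vanishes on the image of `∂Q/∂x'(0,x')`:
    (hinit : ∀ x' ∈ U', ∀ v : Eu n, Λ 0 x' (Qx 0 x' v) = 0) :
    (∀ t ∈ I, ∀ x' ∈ U',
      (∀ v : Eu n, Λ t x' (Qx t x' v) = 0) ∧ Λ t x' (Qt t x') = 1) ∧
    (∀ (W : Set (Eu (n + 1))) (Qinv : Eu (n + 1) → ℝ × Eu n), IsOpen W →
      (∀ x ∈ W, (Qinv x).1 ∈ I ∧ (Qinv x).2 ∈ U' ∧
        Q (Qinv x).1 (Qinv x).2 = x ∧ DifferentiableAt ℝ Qinv x) →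
      ∀ x ∈ W, HasFDerivAt (fun y => (Qinv y).1) (Λ (Qinv x).1 (Qinv x).2) x) := by
  obtain ⟨M, hMt, hMx⟩ := hmixed
  have hvel : ∀ t ∈ I, ∀ y ∈ U', Qt t y = ∑ i, Λ t y (X i (Q t y)) • X i (Q t y) :=
    fun t ht y hy => (hQt t ht y hy).unique (hext y hy t ht).1
  have hperp := apply_partial_eq_zero_of_normalExtremal
    (fun i => (hX i).1.differentiable one_ne_zero) hIopen hIconn hI0 hU' hQx hMt hMx hvel
    (fun t ht y hy => (hext y hy t ht).2) hham hinit
  have hunit : ∀ t ∈ I, ∀ y ∈ U', Λ t y (Qt t y) = 1 := fun t ht y hy => by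
    rw [hvel t ht y hy]; exact apply_sum_apply_smul_eq_one (hham t ht y hy)
  refine ⟨fun t ht y hy => ⟨hperp t ht y hy, hunit t ht y hy⟩, ?_⟩
  intro W Qinv hW hQinv x hx
  have hinj : ∀ z ∈ W, Function.Injective (fderiv ℝ Qinv z) := by
    intro z hz
    obtain ⟨ht, hy, -, hdiff⟩ := hQinv z hz
    obtain ⟨K, hK⟩ := exists_eventually_norm_sub_le_mul_abs (hIopen.mem_nhds ht)
      (hU'.mem_nhds hy) hQt (G := fun w => ∑ i, ‖X i w‖)
      (continuous_finsetSum _ fun i _ => (hX i).1.continuous.norm).continuousAt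
      (fun t ht y hy => hvel t ht y hy ▸
        norm_sum_smul_le_sum_norm_of_sum_sq_eq_one (hham t ht y hy))
      (hQx _ ht _ hy).continuousAt
    exact injective_fderiv_of_rightInverse hdiff
      (eventually_of_mem (hW.mem_nhds hz) fun y hy => (hQinv y hy).2.2.1) (hQx _ ht _ hy) hK
  have hdim : Module.finrank ℝ (Eu (n + 1)) = Module.finrank ℝ (ℝ × Eu n) := by
    simp [Module.finrank_prod, add_comm]
  have hopen : IsOpen (Qinv '' W) :=
    isOpen_image_of_surjective_fderiv hW
      (fun z₁ h₁ z₂ h₂ h => by rw [← (hQinv z₁ h₁).2.2.1, ← (hQinv z₂ h₂).2.2.1, h])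
      (fun z hz => (hQinv z hz).2.2.2)
      (fun z hz => (LinearMap.injective_iff_surjective_of_finrank_eq_finrank hdim).1 (hinj z hz))
  obtain ⟨ht, hy, hQQinv, hdiff⟩ := hQinv x hx
  refine hasFDerivAt_fst_of_rightInverse hdiff (hinj x hx) ?_ hQQinv (hQt _ ht _ hy)
    (hQx _ ht _ hy) (hunit _ ht _ hy) (hperp _ ht _ hy)
  filter_upwards [hopen.mem_nhds (mem_image_of_mem Qinv hx)]
  rintro _ ⟨z, hz, rfl⟩
  rw [(hQinv z hz).2.2.1]
end
end

section
/- (Existence of a quasi-calibration.) Let p ∈ U with X₁(p) ≠ 0, and let h̄ ∈ ℝᵐ be the element of minimal Euclidean norm among solutions of Σⱼ h̄ⱼ Xⱼ(p) = X₁(p) (so h̄ ≠ 0). Then for every ε > 0 there exist an open neighbourhood U_ε ⊆ U of p and a linear functional ℓ ∈ (ℝⁿ)* such that for every q ∈ U_ε: (i) |⟨ℓ, Σⱼ hⱼ Xⱼ(q)⟩| ≤ (1+ε)|h| for every h ∈ ℝᵐ, and (ii) ⟨ℓ, Σⱼ (h̄ⱼ/|h̄|) Xⱼ(q)⟩ ≥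 1 − ε². -/
/-!
The minimal-norm solution `h̄` of `A h = X₁(p)`, where `A h = Σⱼ hⱼ Xⱼ(p)`, is orthogonal to
`ker A`, hence lies in the range of the adjoint: `h̄ = A* ξ`. The functional
`ℓ = ⟨ξ, ·⟩ / |h̄|` then satisfies `ℓ (Σⱼ hⱼ Xⱼ(q)) = ⟨h, c(q)⟩` with `c(q) = (ℓ (Xⱼ(q)))ⱼ`,
and `c(p) = h̄ / |h̄|` is a unit vector. By continuity `|c(q) - c(p)| < min ε ε²` near `p`,
which gives both `|c(q)| ≤ 1 + ε` and `⟨c(p), c(q)⟩ ≥ 1 - ε²`.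
-/

open Set

noncomputable section

open scoped InnerProductSpace

section MinimalNorm

variable {F : Type*} [NormedAddCommGroup F] [InnerProductSpace ℝ F]

theorem Submodule.mem_orthogonal_of_forall_norm_le_norm_sub (K : Submodule ℝ F) {x : F}
    (h : ∀ w ∈ K, ‖x‖ ≤ ‖x - w‖) : x ∈ Kᗮ := by
  have hinf : ‖x - 0‖ = ⨅ w : (K : Set F), ‖x - w‖ := by
    refine le_antisymm ?_ ?_
    · have : Nonempty (K : Set F) := ⟨⟨0, K.zero_mem⟩⟩
      rw [sub_zero]
      exact le_ciInf fun w => h w w.2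
    · exact ciInf_le ⟨0, forall_mem_range.2 fun _ => norm_nonneg _⟩
        (⟨0, K.zero_mem⟩ : (K : Set F))
  rw [Submodule.mem_orthogonal']
  simpa using (norm_eq_iInf_iff_real_inner_eq_zero K K.zero_mem).1 hinf

theorem LinearMap.exists_inner_apply_eq_inner_of_forall_norm_le
    {E : Type*} [NormedAddCommGroup E] [InnerProductSpace ℝ E]
    [FiniteDimensional ℝ F] [FiniteDimensional ℝ E] (A : F →ₗ[ℝ] E) {x : F}
    (hmin : ∀ z, A z = A x → ‖x‖ ≤ ‖z‖) : ∃ ξ : E, ∀ z, ⟪ξ, A z⟫_ℝ = ⟪x, z⟫_ℝ := by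
  have hx : x ∈ (LinearMap.ker A)ᗮ :=
    (LinearMap.ker A).mem_orthogonal_of_forall_norm_le_norm_sub fun w hw =>
      hmin _ (by rw [map_sub, LinearMap.mem_ker.1 hw, sub_zero])
  obtain ⟨ξ, rfl⟩ : x ∈ LinearMap.range (LinearMap.adjoint A) := A.orthogonal_ker ▸ hx
  exact ⟨ξ, fun z => (LinearMap.adjoint_inner_left A z ξ).symm⟩

end MinimalNorm

section PairingVec

variable {ι : Type*} {E : Type*} [TopologicalSpace E] [AddCommGroup E] [Module ℝ E]

def pairingVec (ℓ : E →L[ℝ] ℝ) (v : ι → E) : EuclideanSpace ℝ ι :=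
  WithLp.toLp 2 fun j => ℓ (v j)

theorem ContinuousOn.pairingVec {Y : Type*} [TopologicalSpace Y] {s : Set Y} (ℓ : E →L[ℝ] ℝ)
    {v : ι → Y → E} (hv : ∀ j, ContinuousOn (v j) s) :
    ContinuousOn (fun y => pairingVec ℓ fun j => v j y) s :=
  (PiLp.continuous_toLp 2 _).comp_continuousOn
    (continuousOn_pi.2 fun j => ℓ.continuous.comp_continuousOn (hv j))

variable [Fintype ι]

theorem inner_pairingVec (ℓ : E →L[ℝ] ℝ) (v : ι → E) (h : EuclideanSpace ℝ ι) :
    ⟪h, pairingVec ℓ v⟫_ℝ = ℓ (∑ j, h j • v j) := by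
  simp only [pairingVec, PiLp.inner_apply, RCLike.inner_apply, conj_trivial, map_sum, map_smul,
    smul_eq_mul, mul_comm]

theorem pairingVec_eq_of_forall {ℓ : E →L[ℝ] ℝ} {v : ι → E} {w : EuclideanSpace ℝ ι}
    (hw : ∀ h : EuclideanSpace ℝ ι, ℓ (∑ j, h j • v j) = ⟪w, h⟫_ℝ) : pairingVec ℓ v = w :=
  ext_inner_left ℝ fun h => by rw [inner_pairingVec, hw, real_inner_comm]

end PairingVec

section UnitVector

variable {V : Type*} [NormedAddCommGroup V] [InnerProductSpace ℝ V] {u c : V}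

theorem abs_inner_le_of_norm_sub_le (hu : ‖u‖ = 1) {ε : ℝ} (hc : ‖c - u‖ ≤ ε) (h : V) :
    |⟪h, c⟫_ℝ| ≤ (1 + ε) * ‖h‖ :=
  calc |⟪h, c⟫_ℝ| ≤ ‖h‖ * ‖c‖ := abs_real_inner_le_norm h c
    _ ≤ ‖h‖ * (1 + ε) := by
      gcongr
      calc ‖c‖ = ‖u + (c - u)‖ := by rw [add_sub_cancel]
        _ ≤ 1 + ε := hu ▸ (norm_add_le _ _).trans (by gcongr)
    _ = (1 + ε) * ‖h‖ := mul_comm _ _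

theorem sub_le_inner_of_norm_sub_le (hu : ‖u‖ = 1) {δ : ℝ} (hc : ‖c - u‖ ≤ δ) :
    1 - δ ≤ ⟪u, c⟫_ℝ := by
  have hsplit : ⟪u, c⟫_ℝ = 1 + ⟪u, c - u⟫_ℝ := by
    rw [inner_sub_right, real_inner_self_eq_norm_sq, hu]; ring
  have hsmall : |⟪u, c - u⟫_ℝ| ≤ δ :=
    (abs_real_inner_le_norm u (c - u)).trans (by rw [hu, one_mul]; exact hc)
  linarith [(abs_le.1 hsmall).1]

end UnitVector

theorem exists_quasi_calibration_general
    (n m : ℕ) (hm : 1 ≤ m)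
    (U : Set (Eu n)) (hU : IsOpen U)
    (X : Fin m → Eu n → Eu n)
    (hX : ∀ j, ContinuousOn (X j) U)
    (p : Eu n) (hp : p ∈ U) (hX1p : X ⟨0, hm⟩ p ≠ 0)
    (hbar : Eu m)
    (hbarsol : ∑ j, hbar j • X j p = X ⟨0, hm⟩ p)
    (hbarmin : ∀ h : Eu m, (∑ j, h j • X j p = X ⟨0, hm⟩ p) → ‖hbar‖ ≤ ‖h‖)
    (ε : ℝ) (hε : 0 < ε) :
    ∃ Uε : Set (Eu n), IsOpen Uε ∧ Uε ⊆ U ∧ p ∈ Uε ∧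
      ∃ ℓ : Eu n →L[ℝ] ℝ, ∀ q ∈ Uε,
        (∀ h : Eu m, |ℓ (∑ j, h j • X j q)| ≤ (1 + ε) * ‖h‖) ∧
        1 - ε ^ 2 ≤ ℓ (∑ j, (hbar j / ‖hbar‖) • X j q) := by
  let A : Eu m →ₗ[ℝ] Eu n := Fintype.linearCombination ℝ (fun j => X j p) ∘ₗ
    (WithLp.linearEquiv 2 ℝ (Fin m → ℝ)).toLinearMap
  have hA (h : Eu m) : A h = ∑ j, h j • X j p :=
    Fintype.linearCombination_apply ℝ (fun j => X j p) h.ofLp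
  have hbar_ne : hbar ≠ 0 := by
    rintro rfl
    exact hX1p (by simpa using hbarsol.symm)
  obtain ⟨ξ, hξ⟩ := A.exists_inner_apply_eq_inner_of_forall_norm_le (x := hbar)
    fun z hz => hbarmin z (by rw [← hA, hz, hA, hbarsol])
  let ℓ : Eu n →L[ℝ] ℝ := ‖hbar‖⁻¹ • innerSL ℝ ξ
  let c : Eu n → Eu m := fun q => pairingVec ℓ fun j => X j q
  have hcp : c p = ‖hbar‖⁻¹ • hbar := pairingVec_eq_of_forall fun h => by
    simp [ℓ, ← hA, hξ, real_inner_smul_left]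
  have hunit : ‖c p‖ = 1 := by
    rw [hcp, norm_smul, norm_inv, norm_norm, inv_mul_cancel₀ (norm_ne_zero_iff.2 hbar_ne)]
  refine ⟨U ∩ (fun q => ‖c q - c p‖) ⁻¹' Iio (min ε (ε ^ 2)),
    ((ContinuousOn.pairingVec ℓ hX).sub continuousOn_const).norm.isOpen_inter_preimage hU
      isOpen_Iio,
    inter_subset_left, ⟨hp, by simp [hε]⟩, ℓ, fun q ⟨_, hq⟩ => ⟨fun h => ?_, ?_⟩⟩
  · rw [← inner_pairingVec]
    exact abs_inner_le_of_norm_sub_le hunit ((le_of_lt hq).trans (min_le_left _ _)) h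
  · have hcoeff : ∑ j, (hbar j / ‖hbar‖) • X j q = ∑ j, c p j • X j q := by
      simp [hcp, div_eq_inv_mul]
    rw [hcoeff, ← inner_pairingVec]
    exact sub_le_inner_of_norm_sub_le hunit ((le_of_lt hq).trans (min_le_right _ _))

/-- **Existence of a quasi-calibration** (continuous vector fields, no
bracket-generating or independence assumption): let `p ∈ U` with `X₁(p) ≠ 0`
and let `h̄` be the minimal-norm solution of `Σⱼ h̄ⱼ Xⱼ(p) = X₁(p)`. Then for
every `ε > 0` there are an open neighbourhood `U_ε ⊆ U` of `p` and a linear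
functional `ℓ` such that, on `U_ε`, (i) `|⟨ℓ, Σⱼ hⱼ Xⱼ(q)⟩| ≤ (1+ε)|h|` for
every `h ∈ ℝᵐ` and (ii) `⟨ℓ, Σⱼ (h̄ⱼ/|h̄|) Xⱼ(q)⟩ ≥ 1 - ε²`. -/
theorem exists_quasi_calibration
    (n m : ℕ) (hm : 1 ≤ m)
    (U : Set (Eu n)) (hU : IsOpen U)
    (X : Fin m → Eu n → Eu n)
    (hX : ∀ j, ContinuousOn (X j) U)
    (hnz : ∀ q ∈ U, ∃ i, X i q ≠ 0)
    (p : Eu n) (hp : p ∈ U) (hX1p : X ⟨0, hm⟩ p ≠ 0)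
    (hbar : Eu m)
    (hbarsol : ∑ j, hbar j • X j p = X ⟨0, hm⟩ p)
    (hbarmin : ∀ h : Eu m, (∑ j, h j • X j p = X ⟨0, hm⟩ p) → ‖hbar‖ ≤ ‖h‖)
    (ε : ℝ) (hε : 0 < ε) :
    ∃ Uε : Set (Eu n), IsOpen Uε ∧ Uε ⊆ U ∧ p ∈ Uε ∧
      ∃ ℓ : Eu n →L[ℝ] ℝ, ∀ q ∈ Uε,
        (∀ h : Eu m, |ℓ (∑ j, h j • X j q)| ≤ (1 + ε) * ‖h‖) ∧
        1 - ε ^ 2 ≤ ℓ (∑ j, (hbar j / ‖hbar‖) • X j q) :=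
  exists_quasi_calibration_general n m hm U hU X hX p hp hX1p hbar hbarsol hbarmin ε hε

end
end

section
/- (Quasi-calibration implies an almost-sharp length lower bound.) Let W ⊆ U be open, ε ∈ (0,1), ℓ ∈ (ℝⁿ)* and h̄ ∈ ℝᵐ with h̄ ≠ 0, and assume that for every q ∈ W: (i) |⟨ℓ, Σⱼ hⱼ Xⱼ(q)⟩| ≤ (1+ε)|h| for every h ∈ ℝᵐ, and (ii) ⟨ℓ, Σⱼ (h̄ⱼ/|h̄|) Xⱼ(q)⟩ ≥ 1 − ε². Let γ₀ : [s₁, s₂] → W be an absolutely continuous solution of γ₀'(t) = Σⱼ (h̄ⱼ/|h̄|) Xⱼ(γ₀(t)). Then every admissible curve γ : [a,b] → W with γ(a) = γ₀(s₁) and γ(b) = γ₀(s₂) satisfies L(γ) ≥ (s₂ − s₁)(1 − ε). -/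
/-!
Integrating `ℓ` along a controlled curve turns its endpoint displacement into `∫ ℓ(Σⱼ hⱼ Xⱼ(γ))`.
Along `γ₀` the integrand is at least `1 - ε²`, so `ℓ(γ₀(s₂) - γ₀(s₁)) ≥ (s₂ - s₁)(1 - ε²)`; along
any competitor with the same endpoints it is at most `(1 + ε)|h|`, so the same displacement is at
most `(1 + ε) L(γ)`. Dividing by `1 + ε` gives the bound, since `1 - ε² = (1 - ε)(1 + ε)`.
-/

open MeasureTheory Set
open scoped ENNReal

noncomputable section

namespace IsControlOf

variable {n m : ℕ} {X : Fin m → Eu n → Eu n} {a b : ℝ} {γ : ℝ → Eu n} {h : ℝ → Eu m}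

theorem intervalIntegrable_s11 (hc : IsControlOf X a b γ h) (hab : a ≤ b) :
    IntervalIntegrable (fun t => ∑ j, h t j • X j (γ t)) volume a b :=
  (intervalIntegrable_iff_integrableOn_Icc_of_le hab).2 hc.2.1

theorem map_sub_eq_integral (hc : IsControlOf X a b γ h) (hab : a ≤ b) (ℓ : Eu n →L[ℝ] ℝ) :
    ℓ (γ b - γ a) = ∫ t in a..b, ℓ (∑ j, h t j • X j (γ t)) := by
  rw [sub_eq_iff_eq_add'.2 (hc.2.2 b ⟨hab, le_rfl⟩),
    ℓ.intervalIntegral_comp_comm (hc.intervalIntegrable_s11 hab)]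

theorem ofReal_map_sub_le (hc : IsControlOf X a b γ h) (hab : a ≤ b) (ℓ : Eu n →L[ℝ] ℝ)
    {W : Set (Eu n)} (hγW : ∀ t ∈ Icc a b, γ t ∈ W) {C : ℝ} (hC : 0 ≤ C)
    (hbound : ∀ q ∈ W, ∀ v : Eu m, |ℓ (∑ j, v j • X j q)| ≤ C * ‖v‖) :
    ENNReal.ofReal (ℓ (γ b - γ a)) ≤ ENNReal.ofReal C * ∫⁻ t in Icc a b, (‖h t‖₊ : ℝ≥0∞) := by
  have hpointwise : ∀ t ∈ Icc a b,
      ‖ℓ (∑ j, h t j • X j (γ t))‖ₑ ≤ ENNReal.ofReal C * (‖h t‖₊ : ℝ≥0∞) := fun t ht => by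
    rw [Real.enorm_eq_ofReal_abs, ← enorm_eq_nnnorm, ← ofReal_norm, ← ENNReal.ofReal_mul hC]
    exact ENNReal.ofReal_le_ofReal (hbound _ (hγW t ht) (h t))
  rw [hc.map_sub_eq_integral hab, intervalIntegral.integral_of_le hab,
    ← lintegral_const_mul' _ _ ENNReal.ofReal_ne_top]
  calc ENNReal.ofReal (∫ t in Ioc a b, ℓ (∑ j, h t j • X j (γ t)))
      ≤ ‖∫ t in Ioc a b, ℓ (∑ j, h t j • X j (γ t))‖ₑ := by
        rw [Real.enorm_eq_ofReal_abs]; exact ENNReal.ofReal_le_ofReal (le_abs_self _)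
    _ ≤ ∫⁻ t in Ioc a b, ‖ℓ (∑ j, h t j • X j (γ t))‖ₑ := enorm_integral_le_lintegral_enorm _
    _ ≤ ∫⁻ t in Icc a b, ‖ℓ (∑ j, h t j • X j (γ t))‖ₑ := lintegral_mono_set Ioc_subset_Icc_self
    _ ≤ ∫⁻ t in Icc a b, ENNReal.ofReal C * (‖h t‖₊ : ℝ≥0∞) :=
        setLIntegral_mono' measurableSet_Icc hpointwise

theorem mul_le_map_sub_of_const {u : Eu m} (hc : IsControlOf X a b γ (fun _ => u)) (hab : a ≤ b)
    (ℓ : Eu n →L[ℝ] ℝ) {W : Set (Eu n)} (hγW : ∀ t ∈ Icc a b, γ t ∈ W) {c : ℝ}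
    (hcal : ∀ q ∈ W, c ≤ ℓ (∑ j, u j • X j q)) :
    (b - a) * c ≤ ℓ (γ b - γ a) := by
  have hint : IntervalIntegrable (fun t => ℓ (∑ j, u j • X j (γ t))) volume a b :=
    (intervalIntegrable_iff_integrableOn_Icc_of_le hab).2 (ℓ.integrable_comp hc.2.1)
  have := intervalIntegral.integral_mono_on hab intervalIntegrable_const hint
    fun t ht => hcal _ (hγW t ht)
  rwa [intervalIntegral.integral_const, smul_eq_mul, ← hc.map_sub_eq_integral hab] at this

end IsControlOf

theorem ofReal_map_sub_le_mul_ccLength {n m : ℕ} {X : Fin m → Eu n → Eu n} {a b : ℝ}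
    {γ : ℝ → Eu n} (hab : a ≤ b) (ℓ : Eu n →L[ℝ] ℝ) {W : Set (Eu n)}
    (hγW : ∀ t ∈ Icc a b, γ t ∈ W) {C : ℝ} (hC : 0 < C)
    (hbound : ∀ q ∈ W, ∀ v : Eu m, |ℓ (∑ j, v j • X j q)| ≤ C * ‖v‖) :
    ENNReal.ofReal (ℓ (γ b - γ a)) ≤ ENNReal.ofReal C * ccLength X a b γ := by
  have hC₀ : ENNReal.ofReal C ≠ 0 := by simpa using hC
  simp only [ccLength, ENNReal.mul_iInf_of_ne hC₀ ENNReal.ofReal_ne_top]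
  exact le_iInf₂ fun h hc => hc.ofReal_map_sub_le hab ℓ hγW hC.le hbound

theorem quasi_calibration_length_lower_bound_general
    (n m : ℕ)
    (X : Fin m → Eu n → Eu n)
    (W : Set (Eu n))
    (ε : ℝ) (hε0 : 0 < ε)
    (ℓ : Eu n →L[ℝ] ℝ) (hbar : Eu m)
    (hcal₁ : ∀ q ∈ W, ∀ h : Eu m, |ℓ (∑ j, h j • X j q)| ≤ (1 + ε) * ‖h‖)
    (hcal₂ : ∀ q ∈ W, 1 - ε ^ 2 ≤ ℓ (∑ j, (hbar j / ‖hbar‖) • X j q))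
    (s₁ s₂ : ℝ) (hs : s₁ ≤ s₂)
    (γ₀ : ℝ → Eu n)
    (hγ₀W : ∀ t ∈ Icc s₁ s₂, γ₀ t ∈ W)
    (hγ₀ : IsControlOf X s₁ s₂ γ₀ (fun _ => ‖hbar‖⁻¹ • hbar)) :
    ∀ (a b : ℝ) (γ : ℝ → Eu n), a ≤ b →
      (∀ t ∈ Icc a b, γ t ∈ W) →
      (∃ h, IsControlOf X a b γ h) →
      γ a = γ₀ s₁ → γ b = γ₀ s₂ →
      ENNReal.ofReal ((s₂ - s₁) * (1 - ε)) ≤ ccLength X a b γ := by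
  intro a b γ hab hγW _ ha hb
  have hε : 0 < 1 + ε := by linarith
  have hunit : ∀ q ∈ W, 1 - ε ^ 2 ≤ ℓ (∑ j, (‖hbar‖⁻¹ • hbar) j • X j q) := by
    simpa only [PiLp.smul_apply, smul_eq_mul, inv_mul_eq_div] using hcal₂
  have hlower : (1 + ε) * ((s₂ - s₁) * (1 - ε)) ≤ ℓ (γ b - γ a) := by
    rw [ha, hb]
    calc (1 + ε) * ((s₂ - s₁) * (1 - ε)) = (s₂ - s₁) * (1 - ε ^ 2) := by ring
      _ ≤ ℓ (γ₀ s₂ - γ₀ s₁) := hγ₀.mul_le_map_sub_of_const hs ℓ hγ₀W hunit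
  have hupper := ofReal_map_sub_le_mul_ccLength hab ℓ hγW hε hcal₁
  rw [← ENNReal.mul_le_mul_iff_right (by simpa using hε) ENNReal.ofReal_ne_top,
    ← ENNReal.ofReal_mul hε.le]
  exact (ENNReal.ofReal_le_ofReal hlower).trans hupper

/-- **A quasi-calibration implies an almost-sharp length lower bound**
(continuous vector fields): if `ℓ` satisfies, on the open set `W ⊆ U`,
(i) `|⟨ℓ, Σⱼ hⱼ Xⱼ(q)⟩| ≤ (1+ε)|h|` and (ii) `⟨ℓ, Σⱼ (h̄ⱼ/|h̄|) Xⱼ(q)⟩ ≥ 1-ε²`,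
and `γ₀ : [s₁,s₂] → W` is an absolutely continuous solution of
`γ₀' = Σⱼ (h̄ⱼ/|h̄|) Xⱼ(γ₀)`, then every admissible curve in `W` joining
`γ₀(s₁)` and `γ₀(s₂)` has length at least `(s₂ - s₁)(1 - ε)`. -/
theorem quasi_calibration_length_lower_bound
    (n m : ℕ)
    (U : Set (Eu n)) (hU : IsOpen U)
    (X : Fin m → Eu n → Eu n)
    (hX : ∀ j, ContinuousOn (X j) U)
    (hnz : ∀ q ∈ U, ∃ i, X i q ≠ 0)
    (W : Set (Eu n)) (hW : IsOpen W) (hWU : W ⊆ U)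
    (ε : ℝ) (hε0 : 0 < ε) (hε1 : ε < 1)
    (ℓ : Eu n →L[ℝ] ℝ) (hbar : Eu m) (hbar0 : hbar ≠ 0)
    (hcal₁ : ∀ q ∈ W, ∀ h : Eu m, |ℓ (∑ j, h j • X j q)| ≤ (1 + ε) * ‖h‖)
    (hcal₂ : ∀ q ∈ W, 1 - ε ^ 2 ≤ ℓ (∑ j, (hbar j / ‖hbar‖) • X j q))
    (s₁ s₂ : ℝ) (hs : s₁ ≤ s₂)
    (γ₀ : ℝ → Eu n)
    (hγ₀W : ∀ t ∈ Icc s₁ s₂, γ₀ t ∈ W)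
    (hγ₀ : IsControlOf X s₁ s₂ γ₀ (fun _ => ‖hbar‖⁻¹ • hbar)) :
    ∀ (a b : ℝ) (γ : ℝ → Eu n), a ≤ b →
      (∀ t ∈ Icc a b, γ t ∈ W) →
      (∃ h, IsControlOf X a b γ h) →
      γ a = γ₀ s₁ → γ b = γ₀ s₂ →
      ENNReal.ofReal ((s₂ - s₁) * (1 - ε)) ≤ ccLength X a b γ :=
  quasi_calibration_length_lower_bound_general n m X W ε hε0 ℓ hbar hcal₁ hcal₂ s₁ s₂ hs γ₀ hγ₀W hγ₀

end
end
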